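/- arXiv:0811.0129 — 2 statements merged into one kernel-verified Lean document; each statement's English description precedes it below -/
import Mathlib

section
/- Let K be a field, q ∈ K not a root of unity, and m ≥ 0. There exists an (m+1)-dimensional simple module L over the rank-one algebra U_i with basis v_0, ..., v_m such that ω·v_j = φ q^{-j} v_j, ω'·v_j = φ q^{j-m} v_j, f·v_j = v_{j+1} (with v_{m+1} = 0), and e·v_j = φ q^{-m+1}(m-j+1)_q (j)_q v_{j-1} (with v_{-1} = 0), for any nonzero φ ∈ K. In particular the given formulas define a U_i-module structure on K^{m+1}. -/
/-!
On the basis `v_j`, `ω` and `ω'` are diagonal while `e` and `f` move the index by one, so each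
`q`-commutation relation compares two neighbouring diagonal entries, and `ef - fe` is diagonal
with entries `c_{j+1} - c_j`, where `e v_j = c_j v_{j-1}` and `c_{m+1} = 0`; writing
`(k)_q = (q^k - 1)/(q - 1)` turns the remaining relation into a polynomial identity.

For simplicity: since `q` is not a root of unity, the eigenvalues `φ q^{j-m}` of `ω'` are pairwise
distinct, so applying `∏_{i ≠ j} (ω' - φ q^{i-m})` to a vector of an invariant subspace with nonzero
`j`-th coordinate shows that the subspace contains `v_j`. From there `f` reaches every `v_k` with
`k > j`, and `e`, whose coefficients `c_k = φ q^{1-m} (m-k+1)_q (k)_q` are nonzero for `k ≥ 1`,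
reaches every `v_k` with `k < j`.
-/

/-- The `t`-integer `(k)_t = 1 + t + ⋯ + t^{k-1}`. -/
def qint {K : Type*} [Field K] (t : K) (k : ℕ) : K :=
  ∑ i ∈ Finset.range k, t ^ i

section FinDim

variable {K : Type*} [Field K] (q φ : K) (m : ℕ)

/-- `ω · v_j = φ q^{-j} v_j` on the `(m+1)`-dimensional module. -/
noncomputable def Wmat : Matrix (Fin (m + 1)) (Fin (m + 1)) K :=
  Matrix.diagonal fun j => φ * q⁻¹ ^ (j : ℕ)

/-- `ω' · v_j = φ q^{j-m} v_j` on the `(m+1)`-dimensional module. -/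
noncomputable def W'mat : Matrix (Fin (m + 1)) (Fin (m + 1)) K :=
  Matrix.diagonal fun j => φ * q ^ (j : ℕ) * (q ^ m)⁻¹

/-- `f · v_j = v_{j+1}` (with `v_{m+1} = 0`). -/
def Fmat : Matrix (Fin (m + 1)) (Fin (m + 1)) K :=
  Matrix.of fun i j => if (i : ℕ) = (j : ℕ) + 1 then 1 else 0

/-- `e · v_j = φ q^{-m+1} (m-j+1)_q (j)_q v_{j-1}` (with `v_{-1} = 0`). -/
noncomputable def Emat : Matrix (Fin (m + 1)) (Fin (m + 1)) K :=
  Matrix.of fun i j =>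
    if (i : ℕ) + 1 = (j : ℕ) then
      φ * q * (q ^ m)⁻¹ * qint q (m - (j : ℕ) + 1) * qint q (j : ℕ)
    else 0

open Matrix

lemma qint_zero (t : K) : qint t 0 = 0 := Finset.sum_range_zero _

lemma qint_eq_div {t : K} (ht : t ≠ 1) (k : ℕ) : qint t k = (t ^ k - 1) / (t - 1) :=
  geom_sum_eq ht k

lemma qint_ne_zero {t : K} (ht : t ≠ 1) {k : ℕ} (hk : t ^ k ≠ 1) : qint t k ≠ 0 := by
  rw [qint_eq_div ht]
  exact div_ne_zero (sub_ne_zero.2 hk) (sub_ne_zero.2 ht)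

lemma pow_injective_of_ne_zero {G₀ : Type*} [GroupWithZero G₀] {a : G₀} (ha0 : a ≠ 0)
    (ha : ∀ n : ℕ, 0 < n → a ^ n ≠ 1) : Function.Injective (a ^ · : ℕ → G₀) := by
  have hu : ¬IsOfFinOrder (Units.mk0 a ha0) := by
    rw [isOfFinOrder_iff_pow_eq_one]
    rintro ⟨n, hn, h⟩
    exact ha n hn (by simpa [Units.ext_iff] using h)
  intro k l hkl
  exact injective_pow_iff_not_isOfFinOrder.2 hu (Units.ext (by simpa using hkl))

theorem Matrix.diagonal_mul_eq_smul_mul_diagonal {n α : Type*} [Fintype n] [DecidableEq n]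
    [CommSemiring α] {d : n → α} {A : Matrix n n α} {c : α}
    (h : ∀ i j, A i j ≠ 0 → d i = c * d j) : diagonal d * A = c • (A * diagonal d) := by
  ext i j
  rw [diagonal_mul, smul_apply, mul_diagonal, smul_eq_mul]
  by_cases hA : A i j = 0
  · simp [hA]
  · rw [h i j hA]
    ring

theorem Submodule.single_one_mem_of_diagonal_invariant {ι : Type*} [Fintype ι] [DecidableEq ι]
    {N : Submodule K (ι → K)} {d : ι → K} (hd : Function.Injective d)
    (hN : ∀ x ∈ N, diagonal d *ᵥ x ∈ N) {x : ι → K} (hx : x ∈ N) {j : ι} (hxj : x j ≠ 0) :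
    Pi.single j 1 ∈ N := by
  have hprod : ∀ s : Finset ι, (fun k => (∏ i ∈ s, (d k - d i)) * x k) ∈ N := by
    intro s
    induction s using Finset.induction_on with
    | empty => simpa using hx
    | insert a s ha ih =>
      convert N.sub_mem (hN _ ih) (N.smul_mem (d a) ih) using 1
      ext k
      simp only [Finset.prod_insert ha, mulVec_diagonal, Pi.sub_apply, Pi.smul_apply,
        smul_eq_mul]
      ring
  have hc : (∏ i ∈ Finset.univ.erase j, (d j - d i)) * x j ≠ 0 :=
    mul_ne_zero (Finset.prod_ne_zero_iff.2 fun i hi =>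
      sub_ne_zero.2 (hd.ne (Finset.ne_of_mem_erase hi).symm)) hxj
  rw [← N.smul_mem_iff hc]
  convert hprod (Finset.univ.erase j) using 1
  ext k
  by_cases hk : k = j
  · subst hk
    simp
  · simp only [Pi.smul_apply, Pi.single_eq_of_ne hk, smul_zero]
    rw [Finset.prod_eq_zero (i := k) (by simp [hk]) (sub_self _), zero_mul]

theorem Submodule.eq_top_of_single_one_mem {R : Type*} [Semiring R] {n : ℕ}
    {N : Submodule R (Fin (n + 1) → R)}
    (hup : ∀ i : Fin n, Pi.single i.castSucc 1 ∈ N → Pi.single i.succ 1 ∈ N)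
    (hdown : ∀ i : Fin n, Pi.single i.succ 1 ∈ N → Pi.single i.castSucc 1 ∈ N)
    {j : Fin (n + 1)} (hj : Pi.single j 1 ∈ N) : N = ⊤ := by
  have h0 : Pi.single 0 1 ∈ N := by
    induction j using Fin.induction with
    | zero => exact hj
    | succ i ih => exact ih (hdown i hj)
  have hall : ∀ k, Pi.single k 1 ∈ N := by
    intro k
    induction k using Fin.induction with
    | zero => exact h0
    | succ i ih => exact hup i ih
  rw [eq_top_iff, ← (Pi.basisFun R (Fin (n + 1))).span_eq, Submodule.span_le]
  rintro _ ⟨k, rfl⟩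
  simpa using hall k

noncomputable def ecoeff (j : ℕ) : K := φ * q * (q ^ m)⁻¹ * qint q (m - j + 1) * qint q j

lemma Emat_apply (i j : Fin (m + 1)) :
    Emat q φ m i j = if (i : ℕ) + 1 = j then ecoeff q φ m j else 0 := rfl

lemma ecoeff_zero : ecoeff q φ m 0 = 0 := by simp [ecoeff, qint_zero]

lemma ecoeff_ne_zero (hq0 : q ≠ 0) (hq : ∀ n : ℕ, 0 < n → q ^ n ≠ 1) (hφ : φ ≠ 0) {j : ℕ}
    (hj : 0 < j) : ecoeff q φ m j ≠ 0 := by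
  have hq1 : q ≠ 1 := by simpa using hq 1 one_pos
  refine mul_ne_zero (mul_ne_zero (by simp [hφ, hq0]) ?_) (qint_ne_zero hq1 (hq j hj))
  exact qint_ne_zero hq1 (hq _ (by omega))

lemma ecoeff_succ_sub_ecoeff (hq0 : q ≠ 0) (hq1 : q ≠ 1) {i : ℕ} (hi : i < m) :
    ecoeff q φ m (i + 1) - ecoeff q φ m i
      = q / (q - 1) * (φ * q⁻¹ ^ i - φ * q ^ i * (q ^ m)⁻¹) := by
  have hm : q ^ m = q ^ (m - i) * q ^ i := by rw [← pow_add, Nat.sub_add_cancel hi.le]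
  have hq1' : q - 1 ≠ 0 := sub_ne_zero.2 hq1
  rw [ecoeff, ecoeff, show m - (i + 1) + 1 = m - i by omega, qint_eq_div hq1, qint_eq_div hq1,
    qint_eq_div hq1, qint_eq_div hq1, hm, pow_succ, pow_succ, inv_pow]
  field_simp
  ring

lemma neg_ecoeff_self (hq0 : q ≠ 0) (hq1 : q ≠ 1) :
    -ecoeff q φ m m = q / (q - 1) * (φ * q⁻¹ ^ m - φ * q ^ m * (q ^ m)⁻¹) := by
  have hq1' : q - 1 ≠ 0 := sub_ne_zero.2 hq1
  rw [ecoeff, Nat.sub_self, qint_eq_div hq1, qint_eq_div hq1, inv_pow]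
  field_simp
  ring

lemma Fmat_mulVec_single_castSucc (i : Fin m) :
    Fmat (K := K) m *ᵥ Pi.single i.castSucc 1 = Pi.single i.succ (1 : K) := by
  ext k
  simp [Fmat, Pi.single_apply, Fin.ext_iff]

lemma Fmat_mulVec_single_last :
    Fmat (K := K) m *ᵥ Pi.single (Fin.last m) 1 = (0 : Fin (m + 1) → K) := by
  ext k
  simp [Fmat, k.isLt.ne]

lemma Emat_mulVec_single_succ (i : Fin m) :
    Emat q φ m *ᵥ Pi.single i.succ 1 = ecoeff q φ m (i + 1) • Pi.single i.castSucc 1 := by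
  ext k
  simp [Emat_apply, Pi.single_apply, Fin.ext_iff]

lemma Emat_mulVec_single_zero : Emat q φ m *ᵥ Pi.single 0 1 = 0 := by
  ext k
  simp [Emat_apply]

lemma Emat_mul_Fmat :
    Emat q φ m * Fmat (K := K) m =
      diagonal fun i : Fin (m + 1) => if (i : ℕ) < m then ecoeff q φ m (i + 1) else 0 := by
  refine ext_of_mulVec_single fun j => ?_
  rw [← mulVec_mulVec, diagonal_mulVec_single]
  induction j using Fin.lastCases with
  | last => simp only [Fmat_mulVec_single_last, mulVec_zero, Fin.val_last, lt_irrefl, if_false,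
      mul_one, Pi.single_zero]
  | cast i =>
    rw [Fmat_mulVec_single_castSucc, Emat_mulVec_single_succ, ← Pi.single_smul']
    simp

lemma Fmat_mul_Emat :
    Fmat (K := K) m * Emat q φ m = diagonal fun i : Fin (m + 1) => ecoeff q φ m i := by
  refine ext_of_mulVec_single fun j => ?_
  rw [← mulVec_mulVec, diagonal_mulVec_single]
  induction j using Fin.cases with
  | zero => rw [Emat_mulVec_single_zero, mulVec_zero, Fin.val_zero, ecoeff_zero, zero_mul,
      Pi.single_zero]
  | succ i =>
    rw [Emat_mulVec_single_succ, mulVec_smul, Fmat_mulVec_single_castSucc, ← Pi.single_smul']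
    simp

lemma Emat_mul_Fmat_sub_Fmat_mul_Emat (hq0 : q ≠ 0) (hq1 : q ≠ 1) :
    Emat q φ m * Fmat (K := K) m - Fmat (K := K) m * Emat q φ m
      = (q / (q - 1)) • (Wmat q φ m - W'mat q φ m) := by
  rw [Emat_mul_Fmat, Fmat_mul_Emat, Wmat, W'mat, diagonal_sub, diagonal_sub, ← diagonal_smul]
  congr 1
  funext i
  rw [Pi.smul_apply, smul_eq_mul]
  split_ifs with hi
  · exact ecoeff_succ_sub_ecoeff q φ m hq0 hq1 hi
  · rw [zero_sub, show (i : ℕ) = m by omega]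
    exact neg_ecoeff_self q φ m hq0 hq1

lemma val_succ_eq_of_Emat_apply_ne_zero {i j : Fin (m + 1)} (h : Emat q φ m i j ≠ 0) :
    (i : ℕ) + 1 = j := by
  by_contra hij
  exact h (if_neg hij)

lemma val_eq_succ_of_Fmat_apply_ne_zero {i j : Fin (m + 1)} (h : Fmat (K := K) m i j ≠ 0) :
    (i : ℕ) = j + 1 := by
  by_contra hij
  exact h (if_neg hij)

lemma Wmat_mul_Emat (hq0 : q ≠ 0) : Wmat q φ m * Emat q φ m = q • (Emat q φ m * Wmat q φ m) :=
  diagonal_mul_eq_smul_mul_diagonal fun i j h => by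
    rw [← val_succ_eq_of_Emat_apply_ne_zero q φ m h, pow_succ]
    field_simp

lemma W'mat_mul_Emat (hq0 : q ≠ 0) :
    W'mat q φ m * Emat q φ m = q⁻¹ • (Emat q φ m * W'mat q φ m) :=
  diagonal_mul_eq_smul_mul_diagonal fun i j h => by
    rw [← val_succ_eq_of_Emat_apply_ne_zero q φ m h, pow_succ]
    field_simp

lemma Wmat_mul_Fmat : Wmat q φ m * Fmat (K := K) m = q⁻¹ • (Fmat (K := K) m * Wmat q φ m) :=
  diagonal_mul_eq_smul_mul_diagonal fun i j h => by
    rw [val_eq_succ_of_Fmat_apply_ne_zero m h, pow_succ]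
    ring

lemma W'mat_mul_Fmat : W'mat q φ m * Fmat (K := K) m = q • (Fmat (K := K) m * W'mat q φ m) :=
  diagonal_mul_eq_smul_mul_diagonal fun i j h => by
    rw [val_eq_succ_of_Fmat_apply_ne_zero m h, pow_succ]
    ring

lemma isUnit_Wmat (hq0 : q ≠ 0) (hφ : φ ≠ 0) : IsUnit (Wmat q φ m) :=
  isUnit_diagonal.2 <| Pi.isUnit_iff.2 fun _ => (mul_ne_zero hφ (by simp [hq0])).isUnit

lemma isUnit_W'mat (hq0 : q ≠ 0) (hφ : φ ≠ 0) : IsUnit (W'mat q φ m) :=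
  isUnit_diagonal.2 <| Pi.isUnit_iff.2 fun _ => (by simp [hq0, hφ] : _ ≠ (0 : K)).isUnit

lemma W'mat_diagonal_injective (hq0 : q ≠ 0) (hq : ∀ n : ℕ, 0 < n → q ^ n ≠ 1) (hφ : φ ≠ 0) :
    Function.Injective fun j : Fin (m + 1) => φ * q ^ (j : ℕ) * (q ^ m)⁻¹ :=
  (mul_left_injective₀ (by simp [hq0])).comp <|
    (mul_right_injective₀ hφ).comp <| (pow_injective_of_ne_zero hq0 hq).comp Fin.val_injective

lemma eq_bot_or_eq_top_of_invariant (hq0 : q ≠ 0) (hq : ∀ n : ℕ, 0 < n → q ^ n ≠ 1) (hφ : φ ≠ 0)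
    (N : Submodule K (Fin (m + 1) → K)) (hE : ∀ x ∈ N, Emat q φ m *ᵥ x ∈ N)
    (hF : ∀ x ∈ N, Fmat (K := K) m *ᵥ x ∈ N) (hW' : ∀ x ∈ N, W'mat q φ m *ᵥ x ∈ N) :
    N = ⊥ ∨ N = ⊤ := by
  refine or_iff_not_imp_left.2 fun hN => ?_
  obtain ⟨x, hxN, hx0⟩ := N.ne_bot_iff.1 hN
  obtain ⟨j, hxj⟩ := Function.ne_iff.1 hx0
  have hj : Pi.single j 1 ∈ N :=
    Submodule.single_one_mem_of_diagonal_invariant (W'mat_diagonal_injective q φ m hq0 hq hφ)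
      hW' hxN hxj
  refine Submodule.eq_top_of_single_one_mem (fun i hi => ?_) (fun i hi => ?_) hj
  · rw [← Fmat_mulVec_single_castSucc]
    exact hF _ hi
  · have hEi := hE _ hi
    rw [Emat_mulVec_single_succ] at hEi
    exact (N.smul_mem_iff (ecoeff_ne_zero q φ m hq0 hq hφ i.succ_pos)).1 hEi

/-- for `q` not a root of unity and `φ ≠ 0`, the explicit formulas
above define a `(m+1)`-dimensional simple module over the rank-one algebra
`U_i`: the four operators satisfy the defining relations of `U_i` (with `ω, ω'`
invertible), and every invariant subspace is `⊥` or `⊤`. -/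
theorem finite_dimensional_simple_module {K : Type*} [Field K]
    (q φ : K) (hq0 : q ≠ 0) (hq : ∀ n : ℕ, 0 < n → q ^ n ≠ 1) (hφ : φ ≠ 0)
    (m : ℕ) :
    Wmat q φ m * W'mat q φ m = W'mat q φ m * Wmat q φ m ∧
    Wmat q φ m * Emat q φ m = q • (Emat q φ m * Wmat q φ m) ∧
    W'mat q φ m * Emat q φ m = q⁻¹ • (Emat q φ m * W'mat q φ m) ∧
    Wmat q φ m * Fmat (K := K) m = q⁻¹ • (Fmat (K := K) m * Wmat q φ m) ∧
    W'mat q φ m * Fmat (K := K) m = q • (Fmat (K := K) m * W'mat q φ m) ∧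
    Emat q φ m * Fmat (K := K) m - Fmat (K := K) m * Emat q φ m
      = (q / (q - 1)) • (Wmat q φ m - W'mat q φ m) ∧
    IsUnit (Wmat q φ m) ∧ IsUnit (W'mat q φ m) ∧
    (∀ N : Submodule K (Fin (m + 1) → K),
      (∀ x ∈ N, (Emat q φ m).mulVec x ∈ N ∧ (Fmat (K := K) m).mulVec x ∈ N ∧
        (Wmat q φ m).mulVec x ∈ N ∧ (W'mat q φ m).mulVec x ∈ N) →
      N = ⊥ ∨ N = ⊤) := by
  have hq1 : q ≠ 1 := by simpa using hq 1 one_pos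
  exact ⟨(commute_diagonal _ _).eq, Wmat_mul_Emat q φ m hq0, W'mat_mul_Emat q φ m hq0,
    Wmat_mul_Fmat q φ m, W'mat_mul_Fmat q φ m, Emat_mul_Fmat_sub_Fmat_mul_Emat q φ m hq0 hq1,
    isUnit_Wmat q φ m hq0 hφ, isUnit_W'mat q φ m hq0 hφ, fun N hN =>
    eq_bot_or_eq_top_of_invariant q φ m hq0 hq hφ N (fun x hx => (hN x hx).1)
      (fun x hx => (hN x hx).2.1) (fun x hx => (hN x hx).2.2.2)⟩

end FinDim
end

section
/- For i ≠ j, the element u_{ij}^- = ∑_{k=0}^{1-a_{ij}} (-1)^k binom(1-a_{ij},k)_{q_{ii}} q_{ii}^{k(k-1)/2} q_{ij}^k f_i^k f_j f_i^{1-a_{ij}-k} in Ũ_q(g) satisfies Δ(u_{ij}^-) = u_{ij}^- ⊗ ω_i'^{1-a_{ij}} ω_j' + 1 ⊗ u_{ij}^-. -/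
/-!
The Serre element `u_{ij}^-` is the `N`-th iterate `x_N` of the twisted commutator
`x_{n+1} = x_n f_i - q_{ij} q_{ii}^n f_i x_n`, `x_0 = f_j`: expanding, the coefficients of `x_n`
obey the `q`-Pascal rule. Since `Δ` is an algebra map, `Δ x_{n+1}` is the
same twisted commutator taken with `Δ f_i = 1 ⊗ f_i + f_i ⊗ ω'_i`, and induction on `n` gives
`Δ x_n = x_n ⊗ ω'_i^n ω'_j + ∑_m c_{m,n-m} f_i^m ⊗ x_{n-m} ω'_i^m` with
`c_{m,k} = binom(m+k, m)_{q_ii} ∏_{l<m} (1 - q_{ij} q_{ji} q_{ii}^{k+l})`.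
For `n = N = 1 - a_{ij}` the relation `q_{ij} q_{ji} = q_{ii}^{a_{ij}}` makes the last factor of
every `c_{m,N-m}` with `m ≥ 1` vanish, and only `1 ⊗ x_N` survives from the sum.
-/

open TensorProduct

/-- The Gaussian binomial coefficient `binom(n,k)_t`, via the Pascal recursion
`binom(n,k)_t = t^k binom(n-1,k)_t + binom(n-1,k-1)_t`. -/
def qbinom {K : Type*} [Field K] (t : K) : ℕ → ℕ → K
  | _, 0 => 1
  | 0, _ + 1 => 0
  | n + 1, k + 1 => t ^ (k + 1) * qbinom t n (k + 1) + qbinom t n k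

/-- The quantum Serre element
`u_{ij}^- = ∑_{k=0}^{N} (-1)^k binom(N,k)_{q_{ii}} q_{ii}^{k(k-1)/2} q_{ij}^k
f_i^k f_j f_i^{N-k}` with `N = 1 - a_{ij}`. -/
def serreMinus {K H I : Type*} [Field K] [Ring H] [Module K H]
    (qm : I → I → K) (f : I → H) (N : ℕ) (i j : I) : H :=
  ∑ k ∈ Finset.range (N + 1),
    ((-1 : K) ^ k * qbinom (qm i i) N k * qm i i ^ (k * (k - 1) / 2) * qm i j ^ k) •
      (f i ^ k * f j * f i ^ (N - k))

open Finset

section QBinom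
variable {K : Type*} [Field K] (t : K)

@[simp] lemma qbinom_zero_right (n : ℕ) : qbinom t n 0 = 1 := by
  cases n <;> rfl

@[simp] lemma qbinom_zero_succ (k : ℕ) : qbinom t 0 (k + 1) = 0 := rfl

lemma qbinom_succ_succ (n k : ℕ) :
    qbinom t (n + 1) (k + 1) = t ^ (k + 1) * qbinom t n (k + 1) + qbinom t n k := rfl

lemma qbinom_eq_zero_of_lt {n k : ℕ} (h : n < k) : qbinom t n k = 0 := by
  induction n generalizing k with
  | zero => obtain ⟨k, rfl⟩ := Nat.exists_eq_add_of_lt h; rfl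
  | succ n ih =>
    obtain ⟨k, rfl⟩ := Nat.exists_eq_add_of_lt (Nat.zero_lt_of_lt h)
    rw [qbinom_succ_succ, ih (by omega), ih (by omega), mul_zero, add_zero]

lemma qbinom_succ_succ' (n k : ℕ) :
    t ^ k * qbinom t (n + 1) (k + 1) = t ^ k * qbinom t n (k + 1) + t ^ n * qbinom t n k := by
  induction n generalizing k with
  | zero => cases k <;> simp [qbinom_succ_succ]
  | succ n ih =>
    cases k with
    | zero =>
      have h := ih 0
      simp only [qbinom_succ_succ, qbinom_zero_right, pow_zero, one_mul] at h ⊢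
      linear_combination t * h
    | succ k =>
      have h1 := ih (k + 1)
      have h2 := ih k
      simp only [qbinom_succ_succ] at h1 h2 ⊢
      linear_combination t ^ (k + 2) * h1 + t * h2

end QBinom

lemma sum_range_smul_add_smul_succ {R M : Type*} [Semiring R] [AddCommMonoid M] [Module R M]
    {a b c : ℕ → R} (w : ℕ → M) {n : ℕ} (h0 : c 0 = a 0)
    (hsucc : ∀ m < n, c (m + 1) = a (m + 1) + b m) (hlast : c (n + 1) = b n) :
    ∑ m ∈ range (n + 1), (a m • w m + b m • w (m + 1))
      = ∑ m ∈ range (n + 2), c m • w m := by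
  have hmid : ∑ m ∈ range n, c (m + 1) • w (m + 1)
      = ∑ m ∈ range n, a (m + 1) • w (m + 1) + ∑ m ∈ range n, b m • w (m + 1) := by
    rw [← sum_add_distrib]
    exact sum_congr rfl fun m hm => by rw [hsucc m (mem_range.1 hm), add_smul]
  rw [sum_add_distrib, sum_range_succ' (fun m => a m • w m),
    sum_range_succ (fun m => b m • w (m + 1)), sum_range_succ', sum_range_succ, hmid, h0, hlast]
  abel

section QCommutator
variable {K A : Type*} [CommRing K] [Ring A] [Algebra K A]

def qCommutator (c : K) (y : A) : A →ₗ[K] A :=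
  LinearMap.mulRight K y - c • LinearMap.mulLeft K y

@[simp] lemma qCommutator_apply (c : K) (y x : A) : qCommutator c y x = x * y - c • (y * x) := rfl

def qCommutatorIter (t p : K) (F G : A) : ℕ → A
  | 0 => G
  | n + 1 => qCommutator (p * t ^ n) F (qCommutatorIter t p F G n)

lemma qCommutatorIter_succ (t p : K) (F G : A) (n : ℕ) :
    qCommutatorIter t p F G (n + 1) = qCommutator (p * t ^ n) F (qCommutatorIter t p F G n) := rfl

variable {t : K} {w x : A}

lemma mul_mul_eq_smul_of_mul_eq_smul (h : w * x = t • (x * w)) (z : A) :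
    w * (x * z) = t • (x * (w * z)) := by
  rw [← mul_assoc, h, smul_mul_assoc, mul_assoc]

lemma pow_mul_eq_smul_of_mul_eq_smul (h : w * x = t • (x * w)) (m : ℕ) :
    w ^ m * x = t ^ m • (x * w ^ m) := by
  induction m with
  | zero => simp
  | succ m ih =>
    rw [pow_succ, mul_assoc, h, mul_smul_comm, ← mul_assoc, ih, smul_mul_assoc, smul_smul,
      mul_assoc, ← pow_succ, ← pow_succ']

variable {p r : K} {F G Om : A}

lemma mul_qCommutatorIter (hOF : Om * F = t • (F * Om)) (hOG : Om * G = r • (G * Om))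
    (k : ℕ) :
    Om * qCommutatorIter t p F G k = (r * t ^ k) • (qCommutatorIter t p F G k * Om) := by
  induction k with
  | zero => simpa [qCommutatorIter] using hOG
  | succ k ih =>
    simp only [qCommutatorIter_succ, qCommutator_apply, mul_sub, sub_mul, mul_smul_comm,
      smul_mul_assoc, mul_assoc, mul_mul_eq_smul_of_mul_eq_smul ih,
      mul_mul_eq_smul_of_mul_eq_smul hOF, hOF, ih]
    module

variable {c d : K}

lemma qCommutator_tmul_of_commute {X W : A} (hWF : W * F = c • (F * W))
    (hOW : Om * W = W * Om) :
    qCommutator c ((1 : A) ⊗ₜ[K] F + F ⊗ₜ[K] Om) (X ⊗ₜ[K] W)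
      = qCommutator c F X ⊗ₜ[K] (Om * W) := by
  simp only [qCommutator_apply, mul_add, add_mul, Algebra.TensorProduct.tmul_mul_tmul, mul_one,
    one_mul, hWF, hOW, tmul_smul, sub_tmul, ← smul_tmul']
  module

lemma qCommutator_pow_tmul {X : A} (hOF : Om * F = t • (F * Om)) (hOX : Om * X = d • (X * Om))
    (m : ℕ) :
    qCommutator (t ^ m * c) ((1 : A) ⊗ₜ[K] F + F ⊗ₜ[K] Om) ((F ^ m) ⊗ₜ[K] (X * Om ^ m))
      = t ^ m • ((F ^ m) ⊗ₜ[K] (qCommutator c F X * Om ^ m))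
        + (1 - t ^ m * c * d) • ((F ^ (m + 1)) ⊗ₜ[K] (X * Om ^ (m + 1))) := by
  simp only [qCommutator_apply, mul_add, add_mul, Algebra.TensorProduct.tmul_mul_tmul, mul_one,
    one_mul, mul_assoc, pow_mul_eq_smul_of_mul_eq_smul hOF, mul_mul_eq_smul_of_mul_eq_smul hOX,
    ← pow_succ, ← pow_succ', sub_mul, smul_mul_assoc, mul_smul_comm, tmul_smul, tmul_sub]
  module

end QCommutator

lemma comul_qCommutator {K A : Type*} [CommRing K] [Ring A] [Bialgebra K A] (c : K) (y x : A) :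
    Coalgebra.comul (R := K) (qCommutator c y x)
      = qCommutator c (Coalgebra.comul (R := K) y) (Coalgebra.comul x) := by
  simp only [qCommutator_apply, map_sub, map_smul, Bialgebra.comul_mul]

section SerreCoeff
variable {K A : Type*} [Field K] [Ring A] [Algebra K A]

def serreCoeff (t p : K) (n k : ℕ) : K :=
  (-1 : K) ^ k * qbinom t n k * t ^ (k * (k - 1) / 2) * p ^ k

lemma serreCoeff_succ_succ (t p : K) (n k : ℕ) :
    serreCoeff t p (n + 1) (k + 1) = serreCoeff t p n (k + 1) - p * t ^ n * serreCoeff t p n k := by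
  simp only [serreCoeff, Nat.triangle_succ, pow_add]
  linear_combination (-1 : K) ^ k * (-1) * t ^ (k * (k - 1) / 2) * p ^ k * p *
    qbinom_succ_succ' t n k

theorem qCommutatorIter_eq_sum (t p : K) (F G : A) (n : ℕ) :
    qCommutatorIter t p F G n
      = ∑ k ∈ range (n + 1), serreCoeff t p n k • (F ^ k * G * F ^ (n - k)) := by
  induction n with
  | zero => simp [qCommutatorIter, serreCoeff]
  | succ n ih =>
    rw [← sum_range_smul_add_smul_succ (fun k => F ^ k * G * F ^ (n + 1 - k))
      (a := serreCoeff t p n) (b := fun k => -(p * t ^ n) * serreCoeff t p n k)]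
    · rw [qCommutatorIter_succ, qCommutator_apply, ih, sum_mul, mul_sum, smul_sum,
        ← sum_sub_distrib]
      refine sum_congr rfl fun k hk => ?_
      have hkn : n - k + 1 = n + 1 - k := by have := mem_range.1 hk; omega
      simp only [Nat.add_sub_add_right, smul_mul_assoc, mul_smul_comm, ← mul_assoc, ← pow_succ',
        mul_assoc _ (F ^ (n - k)), ← pow_succ, hkn]
      module
    · simp [serreCoeff]
    · intro m _
      rw [serreCoeff_succ_succ]
      ring
    · rw [serreCoeff_succ_succ, serreCoeff, qbinom_eq_zero_of_lt t (Nat.lt_succ_self n)]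
      ring

end SerreCoeff

section SkewCoeff
variable {K : Type*} [Field K] (t s : K)

def skewCoeff (m k : ℕ) : K :=
  qbinom t (m + k) m * ∏ i ∈ range m, (1 - s * t ^ (k + i))

@[simp] lemma skewCoeff_zero_left (k : ℕ) : skewCoeff t s 0 k = 1 := by
  simp [skewCoeff]

lemma skewCoeff_succ_zero (m : ℕ) :
    skewCoeff t s (m + 1) 0 = skewCoeff t s m 0 * (1 - s * t ^ m) := by
  simp only [skewCoeff, add_zero, qbinom_succ_succ, qbinom_eq_zero_of_lt t (Nat.lt_succ_self m),
    prod_range_succ, zero_add]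
  ring

lemma skewCoeff_succ_succ (m k : ℕ) :
    skewCoeff t s (m + 1) (k + 1)
      = t ^ (m + 1) * skewCoeff t s (m + 1) k
        + (1 - s * t ^ (m + 2 * k + 2)) * skewCoeff t s m (k + 1) := by
  have hQ : ∏ i ∈ range (m + 1), (1 - s * t ^ (k + i))
      = (∏ i ∈ range m, (1 - s * t ^ (k + 1 + i))) * (1 - s * t ^ k) := by
    rw [prod_range_succ']
    simp only [add_assoc, add_comm 1, add_zero]
  simp only [skewCoeff]
  rw [hQ, prod_range_succ (fun i => 1 - s * t ^ (k + 1 + i)) m,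
    show m + 1 + (k + 1) = m + k + 1 + 1 by ring,
    show m + 1 + k = m + k + 1 by ring, show m + (k + 1) = m + k + 1 by ring]
  linear_combination (∏ i ∈ range m, (1 - s * t ^ (k + 1 + i))) *
    (qbinom_succ_succ t (m + k + 1) m - s * t ^ (k + 1) * qbinom_succ_succ' t (m + k + 1) m)

lemma skewCoeff_succ_eq_zero {m k : ℕ} (h : s * t ^ (k + m) = 1) :
    skewCoeff t s (m + 1) k = 0 := by
  rw [skewCoeff, prod_range_succ, h, sub_self, mul_zero, mul_zero]

end SkewCoeff

section Coproduct
variable {K H : Type*} [Field K] [Ring H] [Bialgebra K H] {t p r : K} {F G Om Ps : H}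

theorem comul_qCommutatorIter
    (hΔF : Coalgebra.comul (R := K) F = 1 ⊗ₜ[K] F + F ⊗ₜ[K] Om)
    (hΔG : Coalgebra.comul (R := K) G = 1 ⊗ₜ[K] G + G ⊗ₜ[K] Ps)
    (hOF : Om * F = t • (F * Om)) (hOG : Om * G = r • (G * Om))
    (hPF : Ps * F = p • (F * Ps)) (hOP : Om * Ps = Ps * Om) (n : ℕ) :
    Coalgebra.comul (R := K) (qCommutatorIter t p F G n)
      = qCommutatorIter t p F G n ⊗ₜ[K] (Om ^ n * Ps)
        + ∑ m ∈ range (n + 1), skewCoeff t (p * r) m (n - m) •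
            ((F ^ m) ⊗ₜ[K] (qCommutatorIter t p F G (n - m) * Om ^ m)) := by
  induction n with
  | zero => simp [qCommutatorIter, hΔG, add_comm]
  | succ n ih =>
    have hWF : Om ^ n * Ps * F = (p * t ^ n) • (F * (Om ^ n * Ps)) := by
      rw [mul_assoc, hPF, mul_smul_comm, ← mul_assoc, pow_mul_eq_smul_of_mul_eq_smul hOF,
        smul_mul_assoc, smul_smul, mul_assoc, mul_comm p]
    have hOW : Om * (Om ^ n * Ps) = Om ^ n * Ps * Om := by
      rw [← mul_assoc, ← pow_succ', pow_succ, mul_assoc, hOP, mul_assoc]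
    set w : ℕ → H ⊗[K] H :=
      fun m => (F ^ m) ⊗ₜ[K] (qCommutatorIter t p F G (n + 1 - m) * Om ^ m)
    have hterm : ∀ m ∈ range (n + 1),
        skewCoeff t (p * r) m (n - m) •
          qCommutator (p * t ^ n) (1 ⊗ₜ[K] F + F ⊗ₜ[K] Om)
            ((F ^ m) ⊗ₜ[K] (qCommutatorIter t p F G (n - m) * Om ^ m))
        = (skewCoeff t (p * r) m (n - m) * t ^ m) • w m
          + (skewCoeff t (p * r) m (n - m) * (1 - t ^ m * (p * t ^ (n - m)) * (r * t ^ (n - m))))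
            • w (m + 1) := by
      intro m hm
      have hmn : m ≤ n := Nat.lt_succ_iff.1 (mem_range.1 hm)
      have hc : p * t ^ n = t ^ m * (p * t ^ (n - m)) := by
        rw [mul_left_comm, ← pow_add, Nat.add_sub_cancel' hmn]
      rw [hc, qCommutator_pow_tmul hOF (mul_qCommutatorIter hOF hOG (n - m)) m,
        ← qCommutatorIter_succ]
      simp only [w, smul_add, smul_smul, Nat.add_sub_add_right, Nat.sub_add_comm hmn]
    rw [qCommutatorIter_succ, comul_qCommutator, ih, hΔF,
      map_add, map_sum, qCommutator_tmul_of_commute hWF hOW, ← mul_assoc, ← pow_succ']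
    simp only [map_smul]
    rw [sum_congr rfl hterm, sum_range_smul_add_smul_succ w]
    · simp
    · intro m hm
      obtain ⟨k, rfl⟩ := Nat.exists_eq_add_of_lt hm
      rw [show m + k + 1 + 1 - (m + 1) = k + 1 by omega, show m + k + 1 - (m + 1) = k by omega,
        show m + k + 1 - m = k + 1 by omega, skewCoeff_succ_succ]
      ring
    · simp only [Nat.sub_self, pow_zero, mul_one, skewCoeff_succ_zero]
      ring

theorem comul_qCommutatorIter_succ_of_mul_pow_eq_one
    (hΔF : Coalgebra.comul (R := K) F = 1 ⊗ₜ[K] F + F ⊗ₜ[K] Om)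
    (hΔG : Coalgebra.comul (R := K) G = 1 ⊗ₜ[K] G + G ⊗ₜ[K] Ps)
    (hOF : Om * F = t • (F * Om)) (hOG : Om * G = r • (G * Om))
    (hPF : Ps * F = p • (F * Ps)) (hOP : Om * Ps = Ps * Om) {n : ℕ} (h : p * r * t ^ n = 1) :
    Coalgebra.comul (R := K) (qCommutatorIter t p F G (n + 1))
      = qCommutatorIter t p F G (n + 1) ⊗ₜ[K] (Om ^ (n + 1) * Ps)
        + 1 ⊗ₜ[K] qCommutatorIter t p F G (n + 1) := by
  rw [comul_qCommutatorIter hΔF hΔG hOF hOG hPF hOP, sum_range_succ',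
    sum_eq_zero fun m hm => ?_]
  · simp
  · rw [skewCoeff_succ_eq_zero, zero_smul]
    rwa [show n + 1 - (m + 1) + m = n by have := mem_range.1 hm; omega]

end Coproduct

theorem serreMinus_skew_primitive_general {K H I : Type*} [Field K] [Ring H]
    [Bialgebra K H] (a : I → I → ℤ) (qm : I → I → K)
    (hq0 : ∀ i j, qm i j ≠ 0)
    (hrel : ∀ i j, qm i j * qm j i = qm i i ^ (a i j))
    (f ω' : I → H)
    (hcomm : ∀ i j, ω' i * ω' j = ω' j * ω' i)
    (hconj : ∀ i j, ω' i * f j = qm j i • (f j * ω' i))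
    (hΔf : ∀ i, Coalgebra.comul (R := K) (f i) = 1 ⊗ₜ[K] f i + f i ⊗ₜ[K] ω' i)
    (i j : I) (haij : a i j ≤ 0) :
    Coalgebra.comul (R := K) (serreMinus qm f (1 - a i j).toNat i j)
      = serreMinus qm f (1 - a i j).toNat i j ⊗ₜ[K]
          (ω' i ^ (1 - a i j).toNat * ω' j)
        + (1 : H) ⊗ₜ[K] serreMinus qm f (1 - a i j).toNat i j := by
  obtain ⟨n, hn⟩ : ∃ n : ℕ, (1 - a i j).toNat = n + 1 := ⟨(-a i j).toNat, by omega⟩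
  have hpow : qm i j * qm j i * qm i i ^ n = 1 := by
    rw [hrel, show a i j = -(n : ℤ) by omega, zpow_neg, zpow_natCast,
      inv_mul_cancel₀ (pow_ne_zero n (hq0 i i))]
  have hserre : serreMinus qm f (n + 1) i j
      = qCommutatorIter (qm i i) (qm i j) (f i) (f j) (n + 1) :=
    (qCommutatorIter_eq_sum _ _ _ _ _).symm
  rw [hn, hserre]
  exact comul_qCommutatorIter_succ_of_mul_pow_eq_one (hΔf i) (hΔf j) (hconj i i) (hconj i j)
    (hconj j i) (hcomm i j) hpow

/-- in the Hopf algebra `Ũ_q(g)` defined without Serre relations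
(abstracted here as any bialgebra containing elements `f_i` and invertible
commuting group-likes `ω'_i` with `Δ(f_i) = 1 ⊗ f_i + f_i ⊗ ω'_i` and
`ω'_i f_j ω'^{-1}_i = q_{ji} f_j`, where `q_{ij}q_{ji} = q_{ii}^{a_{ij}}` for a
symmetrizable GCM), the quantum Serre element `u_{ij}^-` satisfies
`Δ(u_{ij}^-) = u_{ij}^- ⊗ ω'_i^{1-a_{ij}} ω'_j + 1 ⊗ u_{ij}^-`. -/
theorem serreMinus_skew_primitive {K H I : Type*} [Field K] [Ring H]
    [Bialgebra K H] (a : I → I → ℤ) (qm : I → I → K)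
    (hq0 : ∀ i j, qm i j ≠ 0)
    (hrel : ∀ i j, qm i j * qm j i = qm i i ^ (a i j))
    (f ω' : I → H) (hωu : ∀ i, IsUnit (ω' i))
    (hgl : ∀ i, Coalgebra.comul (R := K) (ω' i) = ω' i ⊗ₜ[K] ω' i)
    (hcomm : ∀ i j, ω' i * ω' j = ω' j * ω' i)
    (hconj : ∀ i j, ω' i * f j = qm j i • (f j * ω' i))
    (hΔf : ∀ i, Coalgebra.comul (R := K) (f i) = 1 ⊗ₜ[K] f i + f i ⊗ₜ[K] ω' i)
    (i j : I) (hij : i ≠ j) (haij : a i j ≤ 0) :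
    Coalgebra.comul (R := K) (serreMinus qm f (1 - a i j).toNat i j)
      = serreMinus qm f (1 - a i j).toNat i j ⊗ₜ[K]
          (ω' i ^ (1 - a i j).toNat * ω' j)
        + (1 : H) ⊗ₜ[K] serreMinus qm f (1 - a i j).toNat i j :=
  serreMinus_skew_primitive_general a qm hq0 hrel f ω' hcomm hconj hΔf i j haij
end
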